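/- arXiv:2208.11240 — 4 statements merged into one kernel-verified Lean document; each statement's English description precedes it below -/
import Mathlib

section
/- There exists a constant C > 0 such that for every ε ∈ (0,1], every t ∈ ℝ and every ξ ∈ ℝ, |exp(−i t (p_ε(ξ) − ξ²/(4√2))) − 1| ≤ min(C·|t|·ε·|ξ|³, 2), where p_ε(ξ) = ε⁻²(√(1+(1+εξ)²) − √2 − εξ/√2) and exp denotes the complex exponential. -/
/-- `|e^{iy} - 1| ≤ |y|` for real `y`. -/
lemma abs_exp_I_sub_one_le (y : ℝ) :
    ‖Complex.exp (Complex.ofReal y * Complex.I) - 1‖ ≤ |y| := by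
  have hrepr : Complex.exp (Complex.ofReal y * Complex.I) - 1 =
      Complex.ofReal (Real.cos y - 1) + Complex.ofReal (Real.sin y) * Complex.I := by
    rw [Complex.exp_mul_I]
    push_cast
    ring
  rw [hrepr, Complex.norm_add_mul_I]
  have hcos : (Real.cos y - 1) ^ 2 + Real.sin y ^ 2 = 2 - 2 * Real.cos y := by
    nlinarith [Real.sin_sq_add_cos_sq y]
  rw [hcos]
  have hsle : |Real.sin (y / 2)| ≤ |y / 2| := Real.abs_sin_le_abs
  have hs2 : Real.sin (y / 2) ^ 2 ≤ (y / 2) ^ 2 := by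
    have := pow_le_pow_left₀ (abs_nonneg _) hsle 2
    simpa [sq_abs] using this
  have hkey : 2 - 2 * Real.cos y ≤ y ^ 2 := by
    have hdouble : Real.cos (2 * (y / 2)) = Real.cos (y / 2) ^ 2 - Real.sin (y / 2) ^ 2 :=
      Real.cos_two_mul' (y / 2)
    have hy : (2 : ℝ) * (y / 2) = y := by ring
    rw [hy] at hdouble
    nlinarith [Real.sin_sq_add_cos_sq (y / 2)]
  calc Real.sqrt (2 - 2 * Real.cos y) ≤ Real.sqrt (y ^ 2) := Real.sqrt_le_sqrt hkey
    _ = |y| := by rw [Real.sqrt_sq_eq_abs]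

/-- Cubic bound for the Taylor remainder. -/
lemma taylor_cubic (x : ℝ) :
    |Real.sqrt (1 + (1 + x) ^ 2) - Real.sqrt 2 - x / Real.sqrt 2 - x ^ 2 / (4 * Real.sqrt 2)|
      ≤ |x| ^ 3 := by
  have h2pos : (0 : ℝ) < Real.sqrt 2 := Real.sqrt_pos.2 (by norm_num)
  have h2sq : Real.sqrt 2 ^ 2 = 2 := Real.sq_sqrt (by norm_num)
  have h2one : (1 : ℝ) ≤ Real.sqrt 2 := by nlinarith
  set S := Real.sqrt (1 + (1 + x) ^ 2) with hSdef
  have hS0 : 0 ≤ S := Real.sqrt_nonneg _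
  have hS2 : S ^ 2 = 1 + (1 + x) ^ 2 := Real.sq_sqrt (by positivity)
  set g : ℝ := (x ^ 2 + 4 * x + 8) / (4 * Real.sqrt 2) with hgdef
  have hnum : (0 : ℝ) < x ^ 2 + 4 * x + 8 := by nlinarith [sq_nonneg (x + 2)]
  have hgpos : 0 < g := by
    apply div_pos hnum
    positivity
  have heq : Real.sqrt 2 + x / Real.sqrt 2 + x ^ 2 / (4 * Real.sqrt 2) = g := by
    rw [hgdef]
    field_simp
    nlinarith
  have hlhs : S - Real.sqrt 2 - x / Real.sqrt 2 - x ^ 2 / (4 * Real.sqrt 2) = S - g := by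
    rw [← heq]; ring
  rw [hlhs]
  -- S² - g² = -(x³(8+x))/32
  have hg2 : g ^ 2 = (x ^ 2 + 4 * x + 8) ^ 2 / 32 := by
    rw [hgdef, div_pow]
    congr 1
    nlinarith
  have hdiff : S ^ 2 - g ^ 2 = -(x ^ 3 * (8 + x)) / 32 := by
    rw [hS2, hg2]; ring
  -- |S - g| * g ≤ |S - g| * (S + g) = |S² - g²|
  have habs : |S - g| * g ≤ |x| ^ 3 * (8 + |x|) / 32 := by
    have h1 : |S - g| * g ≤ |S - g| * (S + g) := by
      apply mul_le_mul_of_nonneg_left _ (abs_nonneg _)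
      linarith
    have h2 : |S - g| * (S + g) = |S ^ 2 - g ^ 2| := by
      rw [← abs_of_nonneg (by linarith : (0:ℝ) ≤ S + g), ← abs_mul]
      congr 1; ring
    have h3 : |S ^ 2 - g ^ 2| ≤ |x| ^ 3 * (8 + |x|) / 32 := by
      rw [hdiff, abs_div, abs_neg, abs_mul, abs_pow]
      have h32 : |(32:ℝ)| = 32 := by norm_num
      rw [h32]
      have h8 : |8 + x| ≤ 8 + |x| := by
        calc |8 + x| ≤ |(8:ℝ)| + |x| := abs_add_le 8 x
          _ = 8 + |x| := by norm_num
      gcongr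
    linarith
  have hgbig : (8 + |x|) / 32 ≤ g := by
    rw [hgdef, div_le_div_iff₀ (by norm_num) (by positivity)]
    rcases abs_cases x with ⟨h, _⟩ | ⟨h, _⟩ <;> rw [h] <;> nlinarith [sq_nonneg x, sq_nonneg (x+4), sq_nonneg (x-4)]
  -- conclude
  have : |S - g| * g ≤ |x| ^ 3 * g := by
    calc |S - g| * g ≤ |x| ^ 3 * (8 + |x|) / 32 := habs
      _ = |x| ^ 3 * ((8 + |x|) / 32) := by ring
      _ ≤ |x| ^ 3 * g := by
          apply mul_le_mul_of_nonneg_left hgbig (by positivity)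
  exact le_of_mul_le_mul_right (by linarith) hgpos

/-- Pointwise bound for the difference of the two propagator symbols:
`|e^{−it(p_ε(ξ) − ξ²/(4√2))} − 1| ≤ min(C t ε |ξ|³, 2)` where
`p_ε(ξ) = ε⁻²(√(1+(1+εξ)²) − √2 − εξ/√2)`. -/
theorem stmt1 :
    ∃ C : ℝ, 0 < C ∧ ∀ ε ∈ Set.Ioc (0:ℝ) 1, ∀ t ξ : ℝ,
      ‖(Complex.exp (-Complex.I *
            Complex.ofReal (t * ((Real.sqrt (1 + (1 + ε * ξ)^2) - Real.sqrt 2 - ε * ξ / Real.sqrt 2) / ε^2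
              - ξ^2 / (4 * Real.sqrt 2)))) - 1)‖
        ≤ min (C * |t| * ε * |ξ|^3) 2 := by
  refine ⟨1, one_pos, ?_⟩
  rintro ε ⟨hε0, hε1⟩ t ξ
  set θ : ℝ := t * ((Real.sqrt (1 + (1 + ε * ξ)^2) - Real.sqrt 2 - ε * ξ / Real.sqrt 2) / ε^2
      - ξ^2 / (4 * Real.sqrt 2)) with hθ
  have harg : -Complex.I * Complex.ofReal θ = Complex.ofReal (-θ) * Complex.I := by
    push_cast; ring
  rw [harg]
  apply le_min
  · calc ‖Complex.exp (Complex.ofReal (-θ) * Complex.I) - 1‖ ≤ |(-θ)| :=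
        abs_exp_I_sub_one_le (-θ)
      _ = |θ| := abs_neg θ
      _ ≤ 1 * |t| * ε * |ξ| ^ 3 := by
        rw [hθ, abs_mul]
        have hcub := taylor_cubic (ε * ξ)
        have hεsq : (0:ℝ) < ε ^ 2 := by positivity
        have key : |(Real.sqrt (1 + (1 + ε * ξ)^2) - Real.sqrt 2 - ε * ξ / Real.sqrt 2) / ε^2
            - ξ^2 / (4 * Real.sqrt 2)| ≤ ε * |ξ| ^ 3 := by
          have hrw : (Real.sqrt (1 + (1 + ε * ξ)^2) - Real.sqrt 2 - ε * ξ / Real.sqrt 2) / ε^2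
              - ξ^2 / (4 * Real.sqrt 2)
              = (Real.sqrt (1 + (1 + ε * ξ)^2) - Real.sqrt 2 - (ε * ξ) / Real.sqrt 2
                  - (ε * ξ)^2 / (4 * Real.sqrt 2)) / ε^2 := by
            have h2pos : (0 : ℝ) < Real.sqrt 2 := Real.sqrt_pos.2 (by norm_num)
            field_simp
          rw [hrw, abs_div, abs_of_pos hεsq, div_le_iff₀ hεsq]
          calc |Real.sqrt (1 + (1 + ε * ξ)^2) - Real.sqrt 2 - (ε * ξ) / Real.sqrt 2
              - (ε * ξ)^2 / (4 * Real.sqrt 2)| ≤ |ε * ξ| ^ 3 := hcub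
            _ = ε * |ξ| ^ 3 * ε ^ 2 := by
                rw [abs_mul, abs_of_pos hε0]; ring
        calc |t| * |_| ≤ |t| * (ε * |ξ| ^ 3) :=
            mul_le_mul_of_nonneg_left key (abs_nonneg t)
          _ = 1 * |t| * ε * |ξ| ^ 3 := by ring
  · have hnorm : ‖Complex.exp (Complex.ofReal (-θ) * Complex.I)‖ = 1 :=
      Complex.norm_exp_ofReal_mul_I (-θ)
    calc ‖Complex.exp (Complex.ofReal (-θ) * Complex.I) - 1‖
        ≤ ‖Complex.exp (Complex.ofReal (-θ) * Complex.I)‖ + ‖(1:ℂ)‖ :=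
          (norm_sub_le _ _)
      _ = 2 := by rw [hnorm, norm_one]; norm_num
end

section
/- There exists a constant C > 0 such that for every ε ∈ (0,1], every δ ∈ (0,1], every t ∈ ℝ and every g ∈ L²(ℝ; ℂ), the function ξ ↦ (exp(−i t (p_ε(ξ) − ξ²/(4√2))) − 1)·g(ξ) lies in L²(ℝ; ℂ) and its L² norm is at most C·(1+|t|)·δ³·‖g‖_{L²} + 2·‖ξ ↦ 1_{{|ξ| > δ·ε^{−1/3}}}(ξ)·g(ξ)‖_{L²}. -/
open MeasureTheory

lemma exp_I_sub_one_le (θ : ℝ) : ‖Complex.exp (↑θ * Complex.I) - 1‖ ≤ |θ| := by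
  have h1 : Complex.exp (↑θ * Complex.I) - 1 =
      Complex.ofReal (Real.cos θ - 1) + Complex.ofReal (Real.sin θ) * Complex.I := by
    rw [Complex.exp_mul_I]; push_cast; ring
  have h2 : ‖Complex.exp (↑θ * Complex.I) - 1‖^2 = (Real.cos θ - 1)^2 + (Real.sin θ)^2 := by
    rw [h1, Complex.sq_norm, Complex.normSq_apply]
    simp [Complex.cos_ofReal_re, Complex.sin_ofReal_re]
    ring
  have hc := Real.one_sub_sq_div_two_le_cos (x := θ)
  have hs : (Real.sin θ)^2 = 1 - (Real.cos θ)^2 := by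
    have := Real.sin_sq_add_cos_sq θ; linarith
  have hcos1 := Real.cos_le_one θ
  have : ‖Complex.exp (↑θ * Complex.I) - 1‖^2 ≤ |θ|^2 := by
    rw [h2, hs]
    have : θ^2 = |θ|^2 := (sq_abs θ).symm
    nlinarith [sq_nonneg θ, Real.neg_one_le_cos θ]
  have hn : (0:ℝ) ≤ ‖Complex.exp (↑θ * Complex.I) - 1‖ := norm_nonneg _
  nlinarith [abs_nonneg θ]

lemma sqrt_taylor {h : ℝ} (hh : |h| ≤ 1) :
    |Real.sqrt (1 + (1 + h)^2) - (8 + 4*h + h^2) / (4 * Real.sqrt 2)| ≤ |h|^3 := by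
  set s := Real.sqrt (1 + (1 + h)^2) with hsdef
  set q := (8 + 4*h + h^2) / (4 * Real.sqrt 2) with hqdef
  have h2 : Real.sqrt 2 ^ 2 = 2 := Real.sq_sqrt (by norm_num)
  have h2pos : (0:ℝ) < Real.sqrt 2 := Real.sqrt_pos.mpr (by norm_num)
  have hs2 : s^2 = 1 + (1 + h)^2 := Real.sq_sqrt (by positivity)
  have hs0 : 0 ≤ s := Real.sqrt_nonneg _
  have hs1 : 1 ≤ s := by nlinarith [sq_nonneg (1+h), sq_nonneg (s-1)]
  have hhle : -1 ≤ h ∧ h ≤ 1 := abs_le.mp hh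
  have hq0 : 0 < q := by
    rw [hqdef]
    apply div_pos (by nlinarith [sq_nonneg h]) (by positivity)
  have key : (s - q) * (s + q) = -(h^3 * (8 + h)) / 32 := by
    have : (s - q) * (s + q) = s^2 - q^2 := by ring
    rw [this, hs2, hqdef]
    field_simp
    nlinarith [h2]
  have hspq : (0:ℝ) < s + q := by linarith
  have habs : |s - q| * (s + q) = |h|^3 * |8 + h| / 32 := by
    rw [show s + q = |s + q| from (abs_of_pos hspq).symm, ← abs_mul, key,
      abs_div, abs_neg, abs_mul, abs_pow]
    norm_num
  have h8 : |8 + h| ≤ 9 := by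
    rw [abs_le]; constructor <;> linarith
  have h1 : |s - q| ≤ |s - q| * (s + q) :=
    le_mul_of_one_le_right (abs_nonneg _) (by linarith)
  calc |s - q| ≤ |h|^3 * |8 + h| / 32 := by rw [← habs]; exact h1
    _ ≤ |h|^3 := by nlinarith [abs_nonneg h, pow_nonneg (abs_nonneg h) 3]

lemma phi_bound {ε δ x : ℝ} (hε : ε ∈ Set.Ioc (0:ℝ) 1) (hδ : δ ∈ Set.Ioc (0:ℝ) 1)
    (hx : |x| ≤ δ * ε ^ (-(1:ℝ)/3)) :
    |(Real.sqrt (1 + (1 + ε * x)^2) - Real.sqrt 2 - ε * x / Real.sqrt 2) / ε^2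
      - x^2 / (4 * Real.sqrt 2)| ≤ δ^3 := by
  obtain ⟨hε0, hε1⟩ := hε
  obtain ⟨hδ0, hδ1⟩ := hδ
  have h2pos : (0:ℝ) < Real.sqrt 2 := Real.sqrt_pos.mpr (by norm_num)
  have hr2 : Real.sqrt 2 ^ 2 = 2 := Real.sq_sqrt (by norm_num)
  -- ε * ε^(-1/3) = ε^(2/3) ≤ 1
  have hmix : ε * ε ^ (-(1:ℝ)/3) = ε ^ ((2:ℝ)/3) := by
    nth_rewrite 1 [← Real.rpow_one ε]
    rw [← Real.rpow_add hε0]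
    norm_num
  have h23 : ε ^ ((2:ℝ)/3) ≤ 1 := Real.rpow_le_one hε0.le hε1 (by norm_num)
  have hh : |ε * x| ≤ 1 := by
    rw [abs_mul, abs_of_pos hε0]
    calc ε * |x| ≤ ε * (δ * ε ^ (-(1:ℝ)/3)) := by
          exact mul_le_mul_of_nonneg_left hx hε0.le
      _ = δ * (ε * ε ^ (-(1:ℝ)/3)) := by ring
      _ ≤ 1 * 1 := by
          rw [hmix]
          exact mul_le_mul hδ1 h23 (by positivity) (by norm_num)
      _ = 1 := by norm_num
  have hkey := sqrt_taylor hh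
  -- rewrite the expression
  have hid : (Real.sqrt (1 + (1 + ε * x)^2) - Real.sqrt 2 - ε * x / Real.sqrt 2) / ε^2
      - x^2 / (4 * Real.sqrt 2)
      = (Real.sqrt (1 + (1 + ε*x)^2) - (8 + 4*(ε*x) + (ε*x)^2) / (4 * Real.sqrt 2)) / ε^2 := by
    have hε2 : ε^2 ≠ 0 := by positivity
    have hs2 : Real.sqrt 2 ≠ 0 := ne_of_gt h2pos
    field_simp
    linear_combination (-4:ℝ) * hr2
  rw [hid, abs_div, abs_of_pos (show (0:ℝ) < ε^2 by positivity)]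
  -- |x|^3 bound: ε * |x|^3 ≤ δ^3
  have hx3 : |x|^3 ≤ δ^3 * ε ^ (-(1:ℝ)) := by
    have : |x|^3 ≤ (δ * ε ^ (-(1:ℝ)/3))^3 :=
      pow_le_pow_left₀ (abs_nonneg x) hx 3
    calc |x|^3 ≤ (δ * ε ^ (-(1:ℝ)/3))^3 := this
      _ = δ^3 * (ε ^ (-(1:ℝ)/3))^3 := by ring
      _ = δ^3 * ε ^ (-(1:ℝ)) := by
          rw [← Real.rpow_natCast (ε ^ (-(1:ℝ)/3)) 3, ← Real.rpow_mul hε0.le]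
          norm_num
  have hεinv : ε ^ (-(1:ℝ)) = ε⁻¹ := Real.rpow_neg_one ε
  calc |Real.sqrt (1 + (1 + ε*x)^2) - (8 + 4*(ε*x) + (ε*x)^2) / (4 * Real.sqrt 2)| / ε^2
      ≤ |ε * x|^3 / ε^2 := by
        apply div_le_div_of_nonneg_right hkey ?_ |>.trans_eq rfl
        · positivity
    _ = ε * |x|^3 := by
        rw [abs_mul, abs_of_pos hε0, mul_pow]
        field_simp
    _ ≤ ε * (δ^3 * ε⁻¹) := by
        rw [← hεinv]
        exact mul_le_mul_of_nonneg_left hx3 hε0.le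
    _ = δ^3 := by field_simp

/-- Frequency-side formulation of Lemma 3.1(i): for `g ∈ L²(ℝ;ℂ)` the multiplier
`e^{−it(p_ε(ξ)−ξ²/(4√2))} − 1` applied to `g` is in `L²` with norm at most
`C(1+|t|)δ³‖g‖_{L²} + 2‖1_{|ξ|>δε^{-1/3}} g‖_{L²}`. -/
theorem stmt2 :
    ∃ C : ℝ, 0 < C ∧ ∀ ε ∈ Set.Ioc (0:ℝ) 1, ∀ δ ∈ Set.Ioc (0:ℝ) 1, ∀ t : ℝ,
      ∀ g : ℝ → ℂ, MemLp g 2 volume →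
        MemLp (fun ξ : ℝ =>
          (Complex.exp (-Complex.I *
            Complex.ofReal (t * ((Real.sqrt (1 + (1 + ε * ξ)^2) - Real.sqrt 2 - ε * ξ / Real.sqrt 2) / ε^2
              - ξ^2 / (4 * Real.sqrt 2)))) - 1) * g ξ) 2 volume ∧
        eLpNorm (fun ξ : ℝ =>
          (Complex.exp (-Complex.I *
            Complex.ofReal (t * ((Real.sqrt (1 + (1 + ε * ξ)^2) - Real.sqrt 2 - ε * ξ / Real.sqrt 2) / ε^2
              - ξ^2 / (4 * Real.sqrt 2)))) - 1) * g ξ) 2 volume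
          ≤ ENNReal.ofReal (C * (1 + |t|) * δ^3) * eLpNorm g 2 volume
            + 2 * eLpNorm (fun ξ : ℝ =>
                Set.indicator {x : ℝ | δ * ε ^ (-(1:ℝ)/3) < |x|} g ξ) 2 volume := by
  refine ⟨1, one_pos, ?_⟩
  intro ε hε δ hδ t g hg
  set φ : ℝ → ℝ := fun ξ =>
    (Real.sqrt (1 + (1 + ε * ξ)^2) - Real.sqrt 2 - ε * ξ / Real.sqrt 2) / ε^2
      - ξ^2 / (4 * Real.sqrt 2) with hφ
  set m : ℝ → ℂ := fun ξ => Complex.exp (-Complex.I * Complex.ofReal (t * φ ξ)) - 1 with hm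
  have hεne : ε ≠ 0 := ne_of_gt hε.1
  -- continuity of m
  have hφcont : Continuous φ := by
    apply Continuous.sub
    · apply Continuous.div_const
      apply Continuous.sub
      apply Continuous.sub
      · exact (continuous_const.add ((continuous_const.add
          (continuous_const.mul continuous_id)).pow 2)).sqrt
      · exact continuous_const
      · exact (continuous_const.mul continuous_id).div_const _
    · exact (continuous_pow 2).div_const _
  have hmcont : Continuous m := by
    apply Continuous.sub _ continuous_const
    exact Complex.continuous_exp.comp
      (continuous_const.mul (Complex.continuous_ofReal.comp (continuous_const.mul hφcont)))
  -- |m ξ| ≤ 2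
  have hm2 : ∀ ξ, ‖m ξ‖ ≤ 2 := by
    intro ξ
    have h1 : ‖Complex.exp (-Complex.I * Complex.ofReal (t * φ ξ))‖ = 1 := by
      rw [Complex.norm_exp]
      simp
    calc ‖m ξ‖ ≤ ‖Complex.exp (-Complex.I * Complex.ofReal (t * φ ξ))‖ + ‖(1:ℂ)‖ :=
          norm_sub_le _ _
      _ = 2 := by rw [h1]; norm_num
  -- membership
  have hmg_aesm : AEStronglyMeasurable (fun ξ => m ξ * g ξ) volume :=
    hmcont.aestronglyMeasurable.mul hg.aestronglyMeasurable
  have hmem : MemLp (fun ξ => m ξ * g ξ) 2 volume := by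
    apply hg.of_le_mul hmg_aesm
    filter_upwards with ξ
    rw [norm_mul]
    exact mul_le_mul_of_nonneg_right (hm2 ξ) (norm_nonneg _)
  refine ⟨hmem, ?_⟩
  -- split into low/high frequencies
  set S : Set ℝ := {x : ℝ | δ * ε ^ (-(1:ℝ)/3) < |x|} with hS
  have hSmeas : MeasurableSet S :=
    measurableSet_lt measurable_const (_root_.continuous_abs.measurable)
  have hsplit : (fun ξ => m ξ * g ξ) =
      (Sᶜ.indicator (fun ξ => m ξ * g ξ)) + (S.indicator (fun ξ => m ξ * g ξ)) := by
    rw [Set.indicator_compl_add_self]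
  have haesm1 : AEStronglyMeasurable (Sᶜ.indicator (fun ξ => m ξ * g ξ)) volume :=
    hmg_aesm.indicator hSmeas.compl
  have haesm2 : AEStronglyMeasurable (S.indicator (fun ξ => m ξ * g ξ)) volume :=
    hmg_aesm.indicator hSmeas
  have htri : eLpNorm (fun ξ => m ξ * g ξ) 2 volume ≤
      eLpNorm (Sᶜ.indicator (fun ξ => m ξ * g ξ)) 2 volume
        + eLpNorm (S.indicator (fun ξ => m ξ * g ξ)) 2 volume := by
    nth_rewrite 1 [hsplit]
    exact eLpNorm_add_le haesm1 haesm2 one_le_two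
  -- low-frequency bound
  have hc : (0:ℝ) ≤ (1 + |t|) * δ^3 :=
    mul_nonneg (by positivity) (pow_nonneg hδ.1.le 3)
  have hlow : eLpNorm (Sᶜ.indicator (fun ξ => m ξ * g ξ)) 2 volume ≤
      ENNReal.ofReal (1 * (1 + |t|) * δ^3) * eLpNorm g 2 volume := by
    have hpt : ∀ ξ, ‖Sᶜ.indicator (fun ξ => m ξ * g ξ) ξ‖ ≤
        ‖((1 + |t|) * δ^3 : ℝ) • g ξ‖ := by
      intro ξ
      by_cases hξ : ξ ∈ Sᶜ
      · rw [Set.indicator_of_mem hξ, norm_mul, norm_smul]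
        apply mul_le_mul_of_nonneg_right _ (norm_nonneg _)
        have hξ' : |ξ| ≤ δ * ε ^ (-(1:ℝ)/3) := by
          simpa [hS, not_lt] using hξ
        have hφb : |φ ξ| ≤ δ^3 := phi_bound hε hδ hξ'
        have : -Complex.I * Complex.ofReal (t * φ ξ) =
            Complex.ofReal (-(t * φ ξ)) * Complex.I := by
          push_cast; ring
        have hkey := exp_I_sub_one_le (-(t * φ ξ))
        rw [← this] at hkey
        calc ‖m ξ‖ ≤ |(-(t * φ ξ))| := hkey
          _ = |t| * |φ ξ| := by rw [abs_neg, abs_mul]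
          _ ≤ |t| * δ^3 := mul_le_mul_of_nonneg_left hφb (abs_nonneg t)
          _ ≤ ‖((1 + |t|) * δ^3 : ℝ)‖ := by
              rw [Real.norm_eq_abs, abs_of_nonneg hc]
              nlinarith [abs_nonneg t, pow_pos hδ.1 3]
      · rw [Set.indicator_of_notMem hξ]
        simp only [norm_zero]
        positivity
    calc eLpNorm (Sᶜ.indicator (fun ξ => m ξ * g ξ)) 2 volume
        ≤ eLpNorm (((1 + |t|) * δ^3 : ℝ) • g) 2 volume := eLpNorm_mono hpt
      _ = ‖((1 + |t|) * δ^3 : ℝ)‖₊ • eLpNorm g 2 volume := eLpNorm_const_smul _ _ _ _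
      _ = ENNReal.ofReal (1 * (1 + |t|) * δ^3) * eLpNorm g 2 volume := by
          rw [ENNReal.smul_def, smul_eq_mul]
          congr 1
          rw [← enorm_eq_nnnorm, ← ofReal_norm, Real.norm_eq_abs, abs_of_nonneg hc]
          congr 1
          ring
  -- high-frequency bound
  have hhigh : eLpNorm (S.indicator (fun ξ => m ξ * g ξ)) 2 volume ≤
      2 * eLpNorm (fun ξ => S.indicator g ξ) 2 volume := by
    have hpt : ∀ ξ, ‖S.indicator (fun ξ => m ξ * g ξ) ξ‖ ≤
        ‖((2:ℝ)) • S.indicator g ξ‖ := by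
      intro ξ
      by_cases hξ : ξ ∈ S
      · rw [Set.indicator_of_mem hξ, Set.indicator_of_mem hξ, norm_mul, norm_smul]
        apply mul_le_mul_of_nonneg_right _ (norm_nonneg _)
        simpa using hm2 ξ
      · rw [Set.indicator_of_notMem hξ, Set.indicator_of_notMem hξ]
        simp
    calc eLpNorm (S.indicator (fun ξ => m ξ * g ξ)) 2 volume
        ≤ eLpNorm ((2:ℝ) • S.indicator g) 2 volume := eLpNorm_mono hpt
      _ = ‖(2:ℝ)‖₊ • eLpNorm (S.indicator g) 2 volume := eLpNorm_const_smul _ _ _ _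
      _ = 2 * eLpNorm (fun ξ => S.indicator g ξ) 2 volume := by
          rw [ENNReal.smul_def, smul_eq_mul]
          congr 1
          rw [← enorm_eq_nnnorm, ← ofReal_norm, Real.norm_eq_abs]
          norm_num
  exact htri.trans (add_le_add hlow hhigh)
end

section
/- There exists a constant C > 0 such that for every s ∈ (0,3], every ε ∈ (0,1], every t ∈ ℝ and every measurable g : ℝ → ℂ with ξ ↦ (1+ξ²)^{s/2} g(ξ) in L²(ℝ; ℂ), one has ‖ξ ↦ (exp(−i t (p_ε(ξ) − ξ²/(4√2))) − 1)·g(ξ)‖_{L²} ≤ C·(1+|t|)·ε^{s/3}·‖ξ ↦ (1+ξ²)^{s/2} g(ξ)‖_{L²}. -/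
open MeasureTheory

private lemma exp_I_sub_one_le_abs (a : ℝ) :
    ‖Complex.exp ((a : ℂ) * Complex.I) - 1‖ ≤ |a| := by
  have hrepr : Complex.exp ((a : ℂ) * Complex.I) - 1
      = Complex.ofReal (Real.cos a - 1) + Complex.ofReal (Real.sin a) * Complex.I := by
    rw [Complex.exp_mul_I]
    push_cast
    ring
  rw [hrepr, Complex.norm_add_mul_I]
  have h1 : (Real.cos a - 1) ^ 2 + Real.sin a ^ 2 ≤ a ^ 2 := by
    have h2 := Real.sin_sq_eq_half_sub (x := a/2)
    rw [show 2*(a/2) = a by ring] at h2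
    have h3 : Real.sin (a/2) ^ 2 ≤ (a/2) ^ 2 := Real.sin_sq_le_sq
    have h4 : Real.sin a ^ 2 + Real.cos a ^ 2 = 1 := Real.sin_sq_add_cos_sq a
    nlinarith
  calc Real.sqrt ((Real.cos a - 1) ^ 2 + Real.sin a ^ 2) ≤ Real.sqrt (a ^ 2) :=
        Real.sqrt_le_sqrt h1
    _ = |a| := Real.sqrt_sq_eq_abs a

private lemma exp_I_sub_one_le_two (a : ℝ) :
    ‖Complex.exp ((a : ℂ) * Complex.I) - 1‖ ≤ 2 := by
  calc ‖Complex.exp ((a : ℂ) * Complex.I) - 1‖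
      ≤ ‖Complex.exp ((a : ℂ) * Complex.I)‖ + ‖(1 : ℂ)‖ := norm_sub_le _ _
    _ = 2 := by rw [Complex.norm_exp_ofReal_mul_I]; norm_num

private lemma taylor_bound (x : ℝ) :
    |Real.sqrt (1 + (1 + x)^2) - (Real.sqrt 2 + x / Real.sqrt 2 + x^2 / (4 * Real.sqrt 2))|
      ≤ |x|^3 := by
  have hc2 : Real.sqrt 2 ^ 2 = 2 := Real.sq_sqrt (by norm_num)
  have hc1 : (1:ℝ) ≤ Real.sqrt 2 := by nlinarith [Real.sqrt_nonneg 2]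
  have hcle : Real.sqrt 2 ≤ 2 := by nlinarith [Real.sqrt_nonneg 2]
  have hcpos : (0:ℝ) < Real.sqrt 2 := lt_of_lt_of_le one_pos hc1
  set c := Real.sqrt 2 with hc
  set h := Real.sqrt (1 + (1 + x)^2) with hhdef
  have hh0 : 0 ≤ h := Real.sqrt_nonneg _
  have hh : h^2 = 1 + (1 + x)^2 := Real.sq_sqrt (by positivity)
  have hqeq : c + x / c + x^2 / (4 * c) = (x^2 + 4*x + 8) / (4 * c) := by
    field_simp
    nlinarith
  rw [hqeq]
  set q := (x^2 + 4*x + 8) / (4 * c) with hqdef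
  have hnum : (0:ℝ) < x^2 + 4*x + 8 := by nlinarith [sq_nonneg (x+2)]
  have hqpos : 0 < q := by positivity
  have hsum : 0 < h + q := by linarith
  have key : (h - q) * (h + q) = -(x^3 * (8 + x)) / 32 := by
    have hdiff : (h - q) * (h + q) = h^2 - q^2 := by ring
    rw [hdiff, hh, hqdef]
    field_simp
    nlinarith
  have habs8 : |8 + x| ≤ 4 * (x^2 + 4*x + 8) := by
    rcases abs_cases (8 + x) with ⟨he, _⟩ | ⟨he, _⟩ <;> rw [he] <;> nlinarith [sq_nonneg x]
  have hq32 : |8 + x| / 32 ≤ q := by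
    rw [hqdef, div_le_div_iff₀ (by norm_num) (by positivity)]
    calc |8 + x| * (4 * c) ≤ (4 * (x^2+4*x+8)) * (4 * 2) := by
          apply mul_le_mul habs8 (by linarith) (by positivity) (by positivity)
      _ = (x^2 + 4*x + 8) * 32 := by ring
  have hmain : |h - q| * (h + q) ≤ |x|^3 * (h + q) := by
    calc |h - q| * (h + q) = |(h - q) * (h + q)| := by
          rw [abs_mul, abs_of_pos hsum]
      _ = |x|^3 * (|8 + x| / 32) := by
          rw [key, abs_div, abs_neg, abs_mul, abs_pow]
          rw [show |(32:ℝ)| = 32 by norm_num]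
          ring
      _ ≤ |x|^3 * q := mul_le_mul_of_nonneg_left hq32 (by positivity)
      _ ≤ |x|^3 * (h + q) :=
          mul_le_mul_of_nonneg_left (by linarith) (by positivity)
  exact le_of_mul_le_mul_right hmain hsum

private lemma theta_bound {ε : ℝ} (hε : 0 < ε) (ξ : ℝ) :
    |(Real.sqrt (1 + (1 + ε * ξ)^2) - Real.sqrt 2 - ε * ξ / Real.sqrt 2) / ε^2
        - ξ^2 / (4 * Real.sqrt 2)| ≤ ε * |ξ|^3 := by
  have hc1 : (1:ℝ) ≤ Real.sqrt 2 := by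
    nlinarith [Real.sqrt_nonneg 2, Real.sq_sqrt (show (0:ℝ) ≤ 2 by norm_num)]
  have hcpos : (0:ℝ) < Real.sqrt 2 := lt_of_lt_of_le one_pos hc1
  have hT := taylor_bound (ε * ξ)
  have heq : (Real.sqrt (1 + (1 + ε * ξ)^2) - Real.sqrt 2 - ε * ξ / Real.sqrt 2) / ε^2
        - ξ^2 / (4 * Real.sqrt 2)
      = (Real.sqrt (1 + (1 + ε * ξ)^2)
          - (Real.sqrt 2 + (ε*ξ) / Real.sqrt 2 + (ε*ξ)^2 / (4 * Real.sqrt 2))) / ε^2 := by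
    have hc2 : Real.sqrt 2 ^ 2 = 2 := Real.sq_sqrt (by norm_num)
    field_simp
    ring
  rw [heq, abs_div, abs_of_pos (by positivity : (0:ℝ) < ε^2),
    div_le_iff₀ (by positivity : (0:ℝ) < ε^2)]
  calc |Real.sqrt (1 + (1 + ε * ξ)^2)
        - (Real.sqrt 2 + ε*ξ / Real.sqrt 2 + (ε*ξ)^2 / (4 * Real.sqrt 2))| ≤ |ε*ξ|^3 := hT
    _ = ε * |ξ|^3 * ε^2 := by rw [abs_mul, abs_of_pos hε]; ring

/-- Frequency-side formulation of Lemma 3.1(ii): for `H^s` data the multiplier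
`e^{−it(p_ε(ξ)−ξ²/(4√2))} − 1` gains a factor `ε^{s/3}`:
`‖(e^{−it(p_ε−ξ²/(4√2))}−1) g‖_{L²} ≤ C(1+|t|) ε^{s/3} ‖⟨ξ⟩^s g‖_{L²}`. -/
theorem stmt3 :
    ∃ C : ℝ, 0 < C ∧ ∀ s ∈ Set.Ioc (0:ℝ) 3, ∀ ε ∈ Set.Ioc (0:ℝ) 1, ∀ t : ℝ,
      ∀ g : ℝ → ℂ, Measurable g →
        MemLp (fun ξ : ℝ => Complex.ofReal ((1 + ξ^2) ^ (s/2)) * g ξ) 2 volume →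
        eLpNorm (fun ξ : ℝ =>
          (Complex.exp (-Complex.I *
            Complex.ofReal (t * ((Real.sqrt (1 + (1 + ε * ξ)^2) - Real.sqrt 2 - ε * ξ / Real.sqrt 2) / ε^2
              - ξ^2 / (4 * Real.sqrt 2)))) - 1) * g ξ) 2 volume
          ≤ ENNReal.ofReal (C * (1 + |t|) * ε ^ (s/3))
              * eLpNorm (fun ξ : ℝ => Complex.ofReal ((1 + ξ^2) ^ (s/2)) * g ξ) 2 volume := by
  refine ⟨2, by norm_num, ?_⟩
  rintro s ⟨hs0, hs3⟩ ε ⟨hε0, hε1⟩ t g hg hmem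
  set c : ℝ := 2 * (1 + |t|) * ε ^ (s/3) with hcdef
  have htabs : (0:ℝ) ≤ |t| := abs_nonneg t
  have hεs : (0:ℝ) < ε ^ (s/3) := Real.rpow_pos_of_pos hε0 _
  have hcpos : 0 < c := by positivity
  -- pointwise multiplier bound
  have hpt : ∀ ξ : ℝ,
      ‖Complex.exp (-Complex.I *
          Complex.ofReal (t * ((Real.sqrt (1 + (1 + ε * ξ)^2) - Real.sqrt 2 - ε * ξ / Real.sqrt 2) / ε^2
            - ξ^2 / (4 * Real.sqrt 2)))) - 1‖ ≤ c * (1 + ξ^2) ^ (s/2) := by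
    intro ξ
    set θ : ℝ := (Real.sqrt (1 + (1 + ε * ξ)^2) - Real.sqrt 2 - ε * ξ / Real.sqrt 2) / ε^2
        - ξ^2 / (4 * Real.sqrt 2) with hθdef
    have hform : -Complex.I * Complex.ofReal (t * θ) = ((-(t*θ) : ℝ) : ℂ) * Complex.I := by
      push_cast; ring
    rw [hform]
    have hθ : |θ| ≤ ε * |ξ|^3 := theta_bound hε0 ξ
    have hbase1 : (1:ℝ) ≤ (1 + ξ^2) ^ (s/2) :=
      Real.one_le_rpow (by nlinarith [sq_nonneg ξ]) (by positivity)
    have hxs : |ξ| ^ s ≤ (1 + ξ^2) ^ (s/2) := by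
      have h1 : |ξ| ≤ (1 + ξ^2) ^ ((1:ℝ)/2) := by
        rw [← Real.sqrt_eq_rpow, ← Real.sqrt_sq_eq_abs]
        exact Real.sqrt_le_sqrt (by nlinarith [sq_nonneg ξ])
      calc |ξ| ^ s ≤ ((1 + ξ^2) ^ ((1:ℝ)/2)) ^ s :=
            Real.rpow_le_rpow (abs_nonneg _) h1 hs0.le
        _ = (1 + ξ^2) ^ (s/2) := by
            rw [← Real.rpow_mul (by positivity : (0:ℝ) ≤ 1 + ξ^2)]
            norm_num
            rw [one_div, inv_mul_eq_div]
    set b : ℝ := ε ^ ((1:ℝ)/3) * |ξ| with hbdef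
    have hb0 : 0 ≤ b := by positivity
    have hbs : b ^ s = ε ^ (s/3) * |ξ| ^ s := by
      rw [hbdef, Real.mul_rpow (by positivity) (abs_nonneg ξ), ← Real.rpow_mul hε0.le,
        show (1:ℝ)/3 * s = s/3 by ring]
    rcases eq_or_ne ξ 0 with hξ0 | hξ0
    · -- ξ = 0 : θ = 0 bound
      have : ‖Complex.exp (((-(t*θ) : ℝ) : ℂ) * Complex.I) - 1‖ ≤ 0 := by
        calc ‖Complex.exp (((-(t*θ) : ℝ) : ℂ) * Complex.I) - 1‖ ≤ |(-(t*θ))| :=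
              exp_I_sub_one_le_abs _
          _ ≤ |t| * (ε * |ξ|^3) := by
              rw [abs_neg, abs_mul]
              exact mul_le_mul_of_nonneg_left hθ htabs
          _ = 0 := by rw [hξ0]; simp
      calc ‖Complex.exp (((-(t*θ) : ℝ) : ℂ) * Complex.I) - 1‖ ≤ 0 := this
        _ ≤ c * (1 + ξ^2) ^ (s/2) := by positivity
    · have hbpos : 0 < b := by
        have : 0 < |ξ| := abs_pos.mpr hξ0
        positivity
      rcases le_or_gt b 1 with hble | hbgt
      · -- small frequency: use |e^{iθ}-1| ≤ |θ|
        have hb3 : ε * |ξ|^3 = b ^ (3:ℕ) := by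
          rw [hbdef, mul_pow]
          congr 1
          rw [← Real.rpow_natCast (ε ^ ((1:ℝ)/3)) 3, ← Real.rpow_mul hε0.le]
          norm_num
        have hb3s : b ^ (3:ℕ) ≤ b ^ s := by
          rw [← Real.rpow_natCast b 3]
          exact Real.rpow_le_rpow_of_exponent_ge hbpos hble (by exact_mod_cast hs3)
        calc ‖Complex.exp (((-(t*θ) : ℝ) : ℂ) * Complex.I) - 1‖ ≤ |(-(t*θ))| :=
              exp_I_sub_one_le_abs _
          _ = |t| * |θ| := by rw [abs_neg, abs_mul]
          _ ≤ |t| * (ε * |ξ|^3) := mul_le_mul_of_nonneg_left hθ htabs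
          _ ≤ |t| * (ε ^ (s/3) * |ξ| ^ s) := by
              rw [hb3, ← hbs]; exact mul_le_mul_of_nonneg_left hb3s htabs
          _ ≤ |t| * (ε ^ (s/3) * (1 + ξ^2) ^ (s/2)) := by
              apply mul_le_mul_of_nonneg_left _ htabs
              exact mul_le_mul_of_nonneg_left hxs hεs.le
          _ ≤ c * (1 + ξ^2) ^ (s/2) := by
              rw [hcdef]
              have h1 : (0:ℝ) ≤ (1 + ξ^2) ^ (s/2) := by positivity
              nlinarith [mul_nonneg hεs.le h1]
      · -- large frequency: use |e^{iθ}-1| ≤ 2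
        have hbs1 : (1:ℝ) ≤ b ^ s := Real.one_le_rpow hbgt.le hs0.le
        calc ‖Complex.exp (((-(t*θ) : ℝ) : ℂ) * Complex.I) - 1‖ ≤ 2 :=
              exp_I_sub_one_le_two _
          _ ≤ 2 * b ^ s := by linarith
          _ = 2 * (ε ^ (s/3) * |ξ| ^ s) := by rw [hbs]
          _ ≤ 2 * (ε ^ (s/3) * (1 + ξ^2) ^ (s/2)) := by
              apply mul_le_mul_of_nonneg_left _ (by norm_num)
              exact mul_le_mul_of_nonneg_left hxs hεs.le
          _ ≤ c * (1 + ξ^2) ^ (s/2) := by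
              rw [hcdef]
              have h1 : (0:ℝ) ≤ (1 + ξ^2) ^ (s/2) := by positivity
              nlinarith [mul_nonneg hεs.le h1]
  -- conclude the L² estimate
  have hmono : ∀ ξ : ℝ,
      ‖(Complex.exp (-Complex.I *
          Complex.ofReal (t * ((Real.sqrt (1 + (1 + ε * ξ)^2) - Real.sqrt 2 - ε * ξ / Real.sqrt 2) / ε^2
            - ξ^2 / (4 * Real.sqrt 2)))) - 1) * g ξ‖
        ≤ ‖(c : ℂ) * (Complex.ofReal ((1 + ξ^2) ^ (s/2)) * g ξ)‖ := by
    intro ξ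
    rw [norm_mul, norm_mul, norm_mul, Complex.norm_real, Complex.norm_real,
      Real.norm_eq_abs, Real.norm_eq_abs, abs_of_pos hcpos,
      abs_of_pos (by positivity : (0:ℝ) < (1 + ξ^2) ^ (s/2)), ← mul_assoc]
    exact mul_le_mul_of_nonneg_right (hpt ξ) (norm_nonneg _)
  calc eLpNorm (fun ξ : ℝ =>
        (Complex.exp (-Complex.I *
          Complex.ofReal (t * ((Real.sqrt (1 + (1 + ε * ξ)^2) - Real.sqrt 2 - ε * ξ / Real.sqrt 2) / ε^2
            - ξ^2 / (4 * Real.sqrt 2)))) - 1) * g ξ) 2 volume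
      ≤ eLpNorm ((c : ℂ) • fun ξ : ℝ => Complex.ofReal ((1 + ξ^2) ^ (s/2)) * g ξ) 2 volume :=
        eLpNorm_mono hmono
    _ = ‖(c : ℂ)‖₊ • eLpNorm (fun ξ : ℝ => Complex.ofReal ((1 + ξ^2) ^ (s/2)) * g ξ) 2 volume :=
        eLpNorm_const_smul _ _ _ _
    _ = ENNReal.ofReal (2 * (1 + |t|) * ε ^ (s/3))
          * eLpNorm (fun ξ : ℝ => Complex.ofReal ((1 + ξ^2) ^ (s/2)) * g ξ) 2 volume := by
        rw [Complex.nnnorm_real, ENNReal.smul_def, smul_eq_mul]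
        congr 1
        rw [← Real.enorm_eq_ofReal hcpos.le]
        rfl
end

section
/- There exists a constant C > 0 such that for every ε ∈ (0,1], every N > 0, every t ∈ ℝ with t ≠ 0, every y ∈ ℝ, and every continuously differentiable function χ : ℝ → ℂ whose support is contained in {ξ : 1/2 ≤ |ξ| ≤ 4}, one has |∫_ℝ exp(i(yξ − t·p_ε(ξ)))·χ(ξ/N) dξ| ≤ C·(sup_ξ |χ(ξ)| + ∫_ℝ |χ′(ξ)| dξ)·(1+ε²N²)^{3/4}·|t|^{−1/2}, where p_ε(ξ) = ε⁻²(√(1+(1+εξ)²) − √2 − εξ/√2). -/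
open MeasureTheory intervalIntegral Set

open MeasureTheory intervalIntegral Set

lemma vdc_first {a b δ : ℝ} {φ φ' φ'' : ℝ → ℝ}
    (hab : a ≤ b) (hδ : 0 < δ)
    (hd1 : ∀ x, HasDerivAt φ (φ' x) x)
    (hd2 : ∀ x, HasDerivAt φ' (φ'' x) x)
    (hc2 : Continuous φ'')
    (hlow : ∀ x ∈ Icc a b, δ ≤ φ' x)
    (hsign : (∀ x ∈ Icc a b, 0 ≤ φ'' x) ∨ (∀ x ∈ Icc a b, φ'' x ≤ 0)) :
    ‖∫ x in a..b, Complex.exp (Complex.I * (φ x : ℂ))‖ ≤ 3 / δ := by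
  have hIcc : uIcc a b = Icc a b := uIcc_of_le hab
  have hcφ : Continuous φ := continuous_iff_continuousAt.2 fun x => (hd1 x).continuousAt
  have hcφ' : Continuous φ' := continuous_iff_continuousAt.2 fun x => (hd2 x).continuousAt
  have hpos : ∀ x ∈ Icc a b, 0 < φ' x := fun x hx => lt_of_lt_of_le hδ (hlow x hx)
  have hne : ∀ x ∈ Icc a b, φ' x ≠ 0 := fun x hx => (hpos x hx).ne'
  set u : ℝ → ℂ := fun x => -Complex.I * (((φ' x)⁻¹ : ℝ) : ℂ) with hu_def
  set u' : ℝ → ℂ := fun x => -Complex.I * ((-(φ'' x) / (φ' x) ^ 2 : ℝ) : ℂ) with hu'_def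
  set v : ℝ → ℂ := fun x => Complex.exp (Complex.I * (φ x : ℂ)) with hv_def
  set v' : ℝ → ℂ := fun x => Complex.exp (Complex.I * (φ x : ℂ)) * (Complex.I * (φ' x : ℂ)) with hv'_def
  have hdu : ∀ x ∈ uIcc a b, HasDerivAt u (u' x) x := by
    intro x hx
    have h0 : HasDerivAt (fun x => (φ' x)⁻¹) (-(φ'' x) / (φ' x) ^ 2) x :=
      (hd2 x).inv (hne x (hIcc ▸ hx))
    exact (h0.ofReal_comp).const_mul (-Complex.I)
  have hdv : ∀ x ∈ uIcc a b, HasDerivAt v (v' x) x := by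
    intro x _
    have h1 : HasDerivAt (fun x => Complex.I * (φ x : ℂ)) (Complex.I * (φ' x : ℂ)) x :=
      ((hd1 x).ofReal_comp).const_mul Complex.I
    exact h1.cexp
  have hratio_cont : ContinuousOn (fun x => -(φ'' x) / (φ' x) ^ 2) (uIcc a b) :=
    (hc2.neg.continuousOn).div ((hcφ'.pow 2).continuousOn)
      (fun x hx => pow_ne_zero 2 (hne x (hIcc ▸ hx)))
  have hiu' : IntervalIntegrable u' volume a b :=
    (continuousOn_const.mul (Complex.continuous_ofReal.comp_continuousOn hratio_cont)).intervalIntegrable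
  have hiv' : IntervalIntegrable v' volume a b := by
    apply Continuous.intervalIntegrable
    exact (Complex.continuous_exp.comp (continuous_const.mul (Complex.continuous_ofReal.comp hcφ))).mul
      (continuous_const.mul (Complex.continuous_ofReal.comp hcφ'))
  have ibp := integral_mul_deriv_eq_deriv_mul hdu hdv hiu' hiv'
  have hcongr : ∫ x in a..b, u x * v' x = ∫ x in a..b, Complex.exp (Complex.I * (φ x : ℂ)) := by
    apply integral_congr
    intro x hx
    simp only [hu_def, hv'_def]
    have h1 : ((φ' x : ℂ)) ≠ 0 := by exact_mod_cast hne x (hIcc ▸ hx)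
    push_cast
    field_simp
    have h2 : Complex.I * Complex.I = -1 := Complex.I_mul_I
    ring_nf
    rw [Complex.I_sq]
    ring
  rw [← hcongr, ibp]
  have hvnorm : ∀ x, ‖v x‖ = 1 := by
    intro x
    simp only [hv_def]
    rw [mul_comm]
    exact Complex.norm_exp_ofReal_mul_I (φ x)
  have hunorm : ∀ x ∈ Icc a b, ‖u x‖ ≤ 1 / δ := by
    intro x hx
    simp only [hu_def, norm_mul, norm_neg, Complex.norm_I, one_mul, Complex.norm_real,
      Real.norm_eq_abs, abs_inv, abs_of_pos (hpos x hx)]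
    rw [one_div]
    exact inv_anti₀ hδ (hlow x hx)
  -- FTC for the ratio
  have hftc : ∫ x in a..b, φ'' x / (φ' x) ^ 2 = -(φ' b)⁻¹ - -(φ' a)⁻¹ := by
    apply integral_eq_sub_of_hasDerivAt
    · intro x hx
      have h0 : HasDerivAt (fun x => (φ' x)⁻¹) (-(φ'' x) / (φ' x) ^ 2) x :=
        (hd2 x).inv (hne x (hIcc ▸ hx))
      have h1 := h0.neg
      rw [neg_div, neg_neg] at h1
      exact h1
    · exact ((hc2.continuousOn.div ((hcφ'.pow 2).continuousOn)
        (fun x hx => pow_ne_zero 2 (hne x (hIcc ▸ hx))))).intervalIntegrable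
  have hbig : ∫ x in a..b, ‖u' x * v x‖ ≤ 1 / δ := by
    have heq : ∫ x in a..b, ‖u' x * v x‖ = ∫ x in a..b, |φ'' x| / (φ' x) ^ 2 := by
      apply integral_congr
      intro x hx
      have hx' : x ∈ Icc a b := hIcc ▸ hx
      simp only [hu'_def, norm_mul, norm_neg, Complex.norm_I, one_mul, Complex.norm_real,
        Real.norm_eq_abs, hvnorm, mul_one, abs_div, abs_neg, abs_pow, sq_abs]
    rw [heq]
    have hinva : (φ' a)⁻¹ ≤ 1 / δ := by
      rw [one_div]; exact inv_anti₀ hδ (hlow a ⟨le_refl a, hab⟩)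
    have hinvb : (φ' b)⁻¹ ≤ 1 / δ := by
      rw [one_div]; exact inv_anti₀ hδ (hlow b ⟨hab, le_refl b⟩)
    have hinva0 : 0 ≤ (φ' a)⁻¹ := inv_nonneg.2 (hpos a ⟨le_refl a, hab⟩).le
    have hinvb0 : 0 ≤ (φ' b)⁻¹ := inv_nonneg.2 (hpos b ⟨hab, le_refl b⟩).le
    rcases hsign with hs | hs
    · have : ∫ x in a..b, |φ'' x| / (φ' x) ^ 2 = ∫ x in a..b, φ'' x / (φ' x) ^ 2 := by
        apply integral_congr
        intro x hx
        simp only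
        rw [abs_of_nonneg (hs x (hIcc ▸ hx))]
      rw [this, hftc]; linarith
    · have : ∫ x in a..b, |φ'' x| / (φ' x) ^ 2 = ∫ x in a..b, -(φ'' x / (φ' x) ^ 2) := by
        apply integral_congr
        intro x hx
        simp only
        rw [abs_of_nonpos (hs x (hIcc ▸ hx)), neg_div]
      rw [this, intervalIntegral.integral_neg, hftc]; linarith
  have hnorm3 : ‖∫ x in a..b, u' x * v x‖ ≤ 1 / δ :=
    le_trans (norm_integral_le_integral_norm hab) hbig
  calc ‖u b * v b - u a * v a - ∫ x in a..b, u' x * v x‖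
      ≤ ‖u b * v b - u a * v a‖ + ‖∫ x in a..b, u' x * v x‖ := norm_sub_le _ _
    _ ≤ ‖u b‖ * ‖v b‖ + ‖u a‖ * ‖v a‖ + ‖∫ x in a..b, u' x * v x‖ := by
        have := norm_sub_le (u b * v b) (u a * v a)
        simp only [norm_mul] at this ⊢
        linarith
    _ ≤ 1 / δ * 1 + 1 / δ * 1 + 1 / δ := by
        have h1 := hunorm b ⟨hab, le_refl b⟩
        have h2 := hunorm a ⟨le_refl a, hab⟩
        rw [hvnorm a, hvnorm b]
        have n1 : (0:ℝ) ≤ ‖u a‖ := norm_nonneg _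
        have n2 : (0:ℝ) ≤ ‖u b‖ := norm_nonneg _
        simp only [mul_one]
        linarith
    _ ≤ 3 / δ := by rw [mul_one]; rw [← add_div, ← add_div]; norm_num

lemma vdc_conj {a b : ℝ} (f : ℝ → ℂ) :
    ∫ x in a..b, (starRingEnd ℂ) (f x) = (starRingEnd ℂ) (∫ x in a..b, f x) := by
  simp only [intervalIntegral, integral_conj, map_sub]

lemma vdc_exp_conj (r : ℝ) :
    (starRingEnd ℂ) (Complex.exp (Complex.I * (r : ℂ))) = Complex.exp (Complex.I * ((-r : ℝ) : ℂ)) := by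
  rw [← Complex.exp_conj]
  congr 1
  simp [Complex.conj_I]

lemma vdc_norm_flip {a b : ℝ} (φ : ℝ → ℝ) :
    ‖∫ x in a..b, Complex.exp (Complex.I * ((-φ x : ℝ) : ℂ))‖
      = ‖∫ x in a..b, Complex.exp (Complex.I * (φ x : ℂ))‖ := by
  have : (fun x => Complex.exp (Complex.I * ((-φ x : ℝ) : ℂ)))
      = fun x => (starRingEnd ℂ) (Complex.exp (Complex.I * (φ x : ℂ))) := by
    funext x
    rw [vdc_exp_conj]
  rw [this, vdc_conj]
  exact RCLike.norm_conj _

lemma vdc_first_neg {a b δ : ℝ} {φ φ' φ'' : ℝ → ℝ}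
    (hab : a ≤ b) (hδ : 0 < δ)
    (hd1 : ∀ x, HasDerivAt φ (φ' x) x)
    (hd2 : ∀ x, HasDerivAt φ' (φ'' x) x)
    (hc2 : Continuous φ'')
    (hlow : ∀ x ∈ Icc a b, φ' x ≤ -δ)
    (hsign : (∀ x ∈ Icc a b, 0 ≤ φ'' x) ∨ (∀ x ∈ Icc a b, φ'' x ≤ 0)) :
    ‖∫ x in a..b, Complex.exp (Complex.I * (φ x : ℂ))‖ ≤ 3 / δ := by
  rw [← vdc_norm_flip φ]
  apply vdc_first hab hδ (fun x => (hd1 x).neg) (fun x => (hd2 x).neg) hc2.neg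
  · intro x hx
    have := hlow x hx
    linarith
  · rcases hsign with hs | hs
    · exact Or.inr fun x hx => by simpa using hs x hx
    · exact Or.inl fun x hx => by simpa using hs x hx

lemma vdc_second {a b lam : ℝ} {φ φ' φ'' : ℝ → ℝ}
    (hab : a ≤ b) (hlam : 0 < lam)
    (hd1 : ∀ x, HasDerivAt φ (φ' x) x)
    (hd2 : ∀ x, HasDerivAt φ' (φ'' x) x)
    (hc2 : Continuous φ'')
    (hlow : ∀ x ∈ Icc a b, lam ≤ φ'' x) :
    ‖∫ x in a..b, Complex.exp (Complex.I * (φ x : ℂ))‖ ≤ 8 / Real.sqrt lam := by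
  classical
  have hcφ : Continuous φ := continuous_iff_continuousAt.2 fun x => (hd1 x).continuousAt
  have hcφ' : Continuous φ' := continuous_iff_continuousAt.2 fun x => (hd2 x).continuousAt
  set δ := Real.sqrt lam with hδdef
  have hδ : 0 < δ := Real.sqrt_pos.2 hlam
  have hδδ : δ * δ = lam := Real.mul_self_sqrt hlam.le
  -- monotonicity facts
  have hmono : MonotoneOn φ' (Icc a b) := by
    apply monotoneOn_of_deriv_nonneg (convex_Icc a b) hcφ'.continuousOn
      (fun x _ => ((hd2 x).differentiableAt).differentiableWithinAt)
    intro x hx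
    rw [(hd2 x).deriv]
    exact le_trans hlam.le (hlow x (interior_subset hx))
  have hgrow : MonotoneOn (fun x => φ' x - lam * x) (Icc a b) := by
    apply monotoneOn_of_deriv_nonneg (f := fun x => φ' x - lam * x) (convex_Icc a b)
      ((hcφ'.sub (continuous_const.mul continuous_id')).continuousOn)
    · intro x _
      exact ((hd2 x).sub (by simpa using (hasDerivAt_id x).const_mul lam)).differentiableAt.differentiableWithinAt
    · intro x hx
      have hder : HasDerivAt (fun x => φ' x - lam * x) (φ'' x - lam) x :=
        (hd2 x).sub (by simpa using (hasDerivAt_id x).const_mul lam)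
      rw [hder.deriv]
      have := hlow x (interior_subset hx)
      linarith
  -- construct c1
  have hexc1 : ∃ c1, c1 ∈ Icc a b ∧ ((∀ x ∈ Icc a c1, φ' x ≤ -δ) ∨ c1 = a) ∧
      (∀ x ∈ Icc a b, c1 < x → -δ < φ' x) := by
    set S : Set ℝ := Icc a b ∩ {x | φ' x ≤ -δ} with hS_def
    have hSc : IsClosed S := isClosed_Icc.inter (isClosed_le hcφ' continuous_const)
    by_cases hS : S.Nonempty
    · have hScpt : IsCompact S := isCompact_Icc.of_isClosed_subset hSc inter_subset_left
      have hmem : sSup S ∈ S := hScpt.sSup_mem hS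
      refine ⟨sSup S, hmem.1, Or.inl fun x hx => ?_, fun x hx hlt => ?_⟩
      · have hxab : x ∈ Icc a b := ⟨hx.1, le_trans hx.2 hmem.1.2⟩
        exact le_trans (hmono hxab hmem.1 hx.2) hmem.2
      · by_contra hcon
        push_neg at hcon
        have : x ∈ S := ⟨hx, hcon⟩
        exact absurd (le_csSup hScpt.bddAbove this) (not_le.2 hlt)
    · refine ⟨a, left_mem_Icc.2 hab, Or.inr rfl, fun x hx _ => ?_⟩
      by_contra hcon
      push_neg at hcon
      exact hS ⟨x, hx, hcon⟩
  have hexc2 : ∃ c2, c2 ∈ Icc a b ∧ ((∀ x ∈ Icc c2 b, δ ≤ φ' x) ∨ c2 = b) ∧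
      (∀ x ∈ Icc a b, x < c2 → φ' x < δ) := by
    set T : Set ℝ := Icc a b ∩ {x | δ ≤ φ' x} with hT_def
    have hTc : IsClosed T := isClosed_Icc.inter (isClosed_le continuous_const hcφ')
    by_cases hT : T.Nonempty
    · have hTcpt : IsCompact T := isCompact_Icc.of_isClosed_subset hTc inter_subset_left
      have hmem : sInf T ∈ T := hTcpt.sInf_mem hT
      refine ⟨sInf T, hmem.1, Or.inl fun x hx => ?_, fun x hx hlt => ?_⟩
      · have hxab : x ∈ Icc a b := ⟨le_trans hmem.1.1 hx.1, hx.2⟩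
        exact le_trans hmem.2 (hmono hmem.1 hxab hx.1)
      · by_contra hcon
        push_neg at hcon
        have : x ∈ T := ⟨hx, hcon⟩
        exact absurd (csInf_le hTcpt.bddBelow this) (not_le.2 hlt)
    · refine ⟨b, right_mem_Icc.2 hab, Or.inr rfl, fun x hx _ => ?_⟩
      by_contra hcon
      push_neg at hcon
      exact hT ⟨x, hx, hcon⟩
  obtain ⟨c1, hc1ab, hc1left, hc1right⟩ := hexc1
  obtain ⟨c2, hc2ab, hc2right, hc2left⟩ := hexc2
  have hc1c2 : c1 ≤ c2 := by
    rcases hc1left with h1 | h1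
    · rcases hc2right with h2 | h2
      · by_contra hcon
        push_neg at hcon
        have ha1 : φ' c1 ≤ -δ := h1 c1 ⟨hc1ab.1, le_refl c1⟩
        have ha2 : δ ≤ φ' c2 := h2 c2 ⟨le_refl c2, hc2ab.2⟩
        have := hmono hc2ab hc1ab hcon.le
        linarith
      · rw [h2]; exact hc1ab.2
    · rw [h1]; exact hc2ab.1
  -- integrability
  have hint : ∀ p q : ℝ, IntervalIntegrable (fun x => Complex.exp (Complex.I * (φ x : ℂ))) volume p q :=
    fun p q => (Complex.continuous_exp.comp
      (continuous_const.mul (Complex.continuous_ofReal.comp hcφ))).intervalIntegrable p q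
  -- middle bound
  have hmid : ‖∫ x in c1..c2, Complex.exp (Complex.I * (φ x : ℂ))‖ ≤ 2 * δ / lam := by
    have hlen : c2 - c1 ≤ 2 * δ / lam := by
      rcases eq_or_lt_of_le hc1c2 with heq | hlt
      · rw [← heq]; simp; positivity
      · have hφ'c1 : -δ ≤ φ' c1 := by
          have htd : Filter.Tendsto φ' (nhdsWithin c1 (Ioi c1)) (nhds (φ' c1)) :=
            (hcφ'.continuousAt (x := c1)).continuousWithinAt
          refine ge_of_tendsto htd ?_
          filter_upwards [Ioo_mem_nhdsGT hlt] with x hx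
          exact (hc1right x ⟨le_trans hc1ab.1 hx.1.le, le_trans hx.2.le hc2ab.2⟩ hx.1).le
        have hφ'c2 : φ' c2 ≤ δ := by
          have htd : Filter.Tendsto φ' (nhdsWithin c2 (Iio c2)) (nhds (φ' c2)) :=
            (hcφ'.continuousAt (x := c2)).continuousWithinAt
          refine le_of_tendsto htd ?_
          filter_upwards [Ioo_mem_nhdsLT hlt] with x hx
          exact (hc2left x ⟨le_trans hc1ab.1 hx.1.le, le_trans hx.2.le hc2ab.2⟩ hx.2).le
        have hg := hgrow hc1ab hc2ab hc1c2
        simp only at hg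
        rw [le_div_iff₀ hlam]
        nlinarith
    calc ‖∫ x in c1..c2, Complex.exp (Complex.I * (φ x : ℂ))‖
        ≤ 1 * |c2 - c1| := norm_integral_le_of_norm_le_const (fun x _ => by
          rw [mul_comm]; exact le_of_eq (Complex.norm_exp_ofReal_mul_I (φ x)))
      _ = c2 - c1 := by rw [one_mul, abs_of_nonneg (sub_nonneg.2 hc1c2)]
      _ ≤ 2 * δ / lam := hlen
  -- left bound
  have hleft : ‖∫ x in a..c1, Complex.exp (Complex.I * (φ x : ℂ))‖ ≤ 3 / δ := by
    rcases hc1left with h1 | h1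
    · exact vdc_first_neg hc1ab.1 hδ hd1 hd2 hc2 h1
        (Or.inl fun x hx => le_trans hlam.le (hlow x ⟨hx.1, le_trans hx.2 hc1ab.2⟩))
    · rw [h1]; simp; positivity
  have hright : ‖∫ x in c2..b, Complex.exp (Complex.I * (φ x : ℂ))‖ ≤ 3 / δ := by
    rcases hc2right with h2 | h2
    · exact vdc_first hc2ab.2 hδ hd1 hd2 hc2 h2
        (Or.inl fun x hx => le_trans hlam.le (hlow x ⟨le_trans hc2ab.1 hx.1, hx.2⟩))
    · rw [h2]; simp; positivity
  -- combine
  have hsplit : ∫ x in a..b, Complex.exp (Complex.I * (φ x : ℂ))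
      = (∫ x in a..c1, Complex.exp (Complex.I * (φ x : ℂ)))
        + (∫ x in c1..c2, Complex.exp (Complex.I * (φ x : ℂ)))
        + (∫ x in c2..b, Complex.exp (Complex.I * (φ x : ℂ))) := by
    rw [integral_add_adjacent_intervals (hint a c1) (hint c1 c2),
      integral_add_adjacent_intervals (hint a c2) (hint c2 b)]
  rw [hsplit]
  have h2δ : 2 * δ / lam = 2 / δ := by
    rw [← hδδ]; field_simp
  calc ‖_ + _ + _‖ ≤ ‖(∫ x in a..c1, Complex.exp (Complex.I * (φ x : ℂ)))
        + (∫ x in c1..c2, Complex.exp (Complex.I * (φ x : ℂ)))‖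
        + ‖∫ x in c2..b, Complex.exp (Complex.I * (φ x : ℂ))‖ := norm_add_le _ _
    _ ≤ ‖(∫ x in a..c1, Complex.exp (Complex.I * (φ x : ℂ)))‖
        + ‖(∫ x in c1..c2, Complex.exp (Complex.I * (φ x : ℂ)))‖
        + ‖∫ x in c2..b, Complex.exp (Complex.I * (φ x : ℂ))‖ := by
          have := norm_add_le (∫ x in a..c1, Complex.exp (Complex.I * (φ x : ℂ)))
            (∫ x in c1..c2, Complex.exp (Complex.I * (φ x : ℂ)))
          linarith
    _ ≤ 3 / δ + 2 * δ / lam + 3 / δ := by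
          have := hmid; have := hleft; have := hright; linarith
    _ = 8 / δ := by rw [h2δ]; field_simp; ring

lemma vdc_second_sign {a b lam : ℝ} {φ φ' φ'' : ℝ → ℝ}
    (hab : a ≤ b) (hlam : 0 < lam)
    (hd1 : ∀ x, HasDerivAt φ (φ' x) x)
    (hd2 : ∀ x, HasDerivAt φ' (φ'' x) x)
    (hc2 : Continuous φ'')
    (hsign : (∀ x ∈ Icc a b, lam ≤ φ'' x) ∨ (∀ x ∈ Icc a b, φ'' x ≤ -lam)) :
    ‖∫ x in a..b, Complex.exp (Complex.I * (φ x : ℂ))‖ ≤ 8 / Real.sqrt lam := by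
  rcases hsign with hs | hs
  · exact vdc_second hab hlam hd1 hd2 hc2 hs
  · rw [← vdc_norm_flip φ]
    apply vdc_second hab hlam (fun x => (hd1 x).neg) (fun x => (hd2 x).neg) hc2.neg
    intro x hx
    have := hs x hx
    linarith

lemma vdc_amp {a b lam M : ℝ} {φ φ' φ'' : ℝ → ℝ} {ψ ψ' : ℝ → ℂ}
    (hab : a ≤ b) (hlam : 0 < lam)
    (hd1 : ∀ x, HasDerivAt φ (φ' x) x)
    (hd2 : ∀ x, HasDerivAt φ' (φ'' x) x)
    (hc2 : Continuous φ'')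
    (hsign : (∀ x ∈ Icc a b, lam ≤ φ'' x) ∨ (∀ x ∈ Icc a b, φ'' x ≤ -lam))
    (hψ : ∀ x, HasDerivAt ψ (ψ' x) x)
    (hψ'c : Continuous ψ')
    (hM : ∀ x ∈ Icc a b, ‖ψ x‖ ≤ M) :
    ‖∫ x in a..b, Complex.exp (Complex.I * (φ x : ℂ)) * ψ x‖
      ≤ 8 / Real.sqrt lam * (M + ∫ x in a..b, ‖ψ' x‖) := by
  have hcφ : Continuous φ := continuous_iff_continuousAt.2 fun x => (hd1 x).continuousAt
  have hce : Continuous (fun x => Complex.exp (Complex.I * (φ x : ℂ))) :=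
    Complex.continuous_exp.comp (continuous_const.mul (Complex.continuous_ofReal.comp hcφ))
  set F : ℝ → ℂ := fun x => ∫ u in a..x, Complex.exp (Complex.I * (φ u : ℂ)) with hF_def
  have hFd : ∀ x, HasDerivAt F (Complex.exp (Complex.I * (φ x : ℂ))) x :=
    fun x => (hce.integral_hasStrictDerivAt a x).hasDerivAt
  have hFc : Continuous F := continuous_iff_continuousAt.2 fun x => (hFd x).continuousAt
  have hFbound : ∀ x ∈ Icc a b, ‖F x‖ ≤ 8 / Real.sqrt lam := by
    intro x hx
    apply vdc_second_sign hx.1 hlam hd1 hd2 hc2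
    rcases hsign with hs | hs
    · exact Or.inl fun u hu => hs u ⟨hu.1, le_trans hu.2 hx.2⟩
    · exact Or.inr fun u hu => hs u ⟨hu.1, le_trans hu.2 hx.2⟩
  have hψc : Continuous ψ := continuous_iff_continuousAt.2 fun x => (hψ x).continuousAt
  have ibp := integral_mul_deriv_eq_deriv_mul
    (u := ψ) (u' := ψ') (v := F) (v' := fun x => Complex.exp (Complex.I * (φ x : ℂ)))
    (fun x _ => hψ x) (fun x _ => hFd x)
    (hψ'c.intervalIntegrable a b) (hce.intervalIntegrable a b)
  have hFa : F a = 0 := integral_same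
  have hgoal : ∫ x in a..b, Complex.exp (Complex.I * (φ x : ℂ)) * ψ x
      = ∫ x in a..b, ψ x * Complex.exp (Complex.I * (φ x : ℂ)) := by
    apply integral_congr
    intro x _
    exact mul_comm _ _
  rw [hgoal, ibp, hFa]
  have hsqrtpos : 0 < 8 / Real.sqrt lam := by positivity
  have hM0 : 0 ≤ M := le_trans (norm_nonneg _) (hM b ⟨hab, le_refl b⟩)
  have hterm1 : ‖ψ b * F b‖ ≤ M * (8 / Real.sqrt lam) := by
    rw [norm_mul]
    exact mul_le_mul (hM b ⟨hab, le_refl b⟩) (hFbound b ⟨hab, le_refl b⟩) (norm_nonneg _) hM0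
  have hterm2 : ‖∫ x in a..b, ψ' x * F x‖ ≤ (∫ x in a..b, ‖ψ' x‖) * (8 / Real.sqrt lam) := by
    refine le_trans (norm_integral_le_integral_norm hab) ?_
    have h1 : ∫ x in a..b, ‖ψ' x * F x‖ ≤ ∫ x in a..b, ‖ψ' x‖ * (8 / Real.sqrt lam) := by
      apply integral_mono_on hab
      · exact ((hψ'c.mul hFc).norm).intervalIntegrable a b
      · exact ((hψ'c.norm.mul continuous_const)).intervalIntegrable a b
      · intro x hx
        rw [norm_mul]
        exact mul_le_mul_of_nonneg_left (hFbound x hx) (norm_nonneg _)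
    rw [intervalIntegral.integral_mul_const] at h1
    exact h1
  have hnn : 0 ≤ ∫ x in a..b, ‖ψ' x‖ :=
    intervalIntegral.integral_nonneg hab (fun x _ => norm_nonneg _)
  calc ‖ψ b * F b - ψ a * 0 - ∫ x in a..b, ψ' x * F x‖
      ≤ ‖ψ b * F b‖ + ‖∫ x in a..b, ψ' x * F x‖ := by
        rw [mul_zero, sub_zero]; exact norm_sub_le _ _
    _ ≤ M * (8 / Real.sqrt lam) + (∫ x in a..b, ‖ψ' x‖) * (8 / Real.sqrt lam) := by
        linarith
    _ = 8 / Real.sqrt lam * (M + ∫ x in a..b, ‖ψ' x‖) := by ring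



set_option maxHeartbeats 2000000 in
/-- Van der Corput oscillatory-integral kernel estimate at dyadic frequency `N`
for the rescaled Klein–Gordon phase `p_ε(ξ) = ε⁻²(√(1+(1+εξ)²) − √2 − εξ/√2)`. -/
theorem stmt4 :
    ∃ C : ℝ, 0 < C ∧ ∀ ε ∈ Set.Ioc (0:ℝ) 1, ∀ N : ℝ, 0 < N → ∀ t : ℝ, t ≠ 0 → ∀ y : ℝ,
      ∀ χ : ℝ → ℂ, ContDiff ℝ 1 χ →
        (Function.support χ ⊆ {ξ : ℝ | 1/2 ≤ |ξ| ∧ |ξ| ≤ 4}) →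
        ‖(∫ ξ : ℝ,
            Complex.exp (Complex.I *
              Complex.ofReal (y * ξ -
                t * ((Real.sqrt (1 + (1 + ε * ξ)^2) - Real.sqrt 2 - ε * ξ / Real.sqrt 2) / ε^2)))
              * χ (ξ / N))‖
          ≤ C * ((⨆ ξ : ℝ, ‖χ ξ‖) + ∫ ξ : ℝ, ‖deriv χ ξ‖)
              * (1 + ε^2 * N^2) ^ ((3:ℝ)/4) * |t| ^ (-(1:ℝ)/2) := by
  refine ⟨256, by norm_num, ?_⟩
  rintro ε ⟨hε0, hε1⟩ N hN t ht y χ hχ hsupp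
  have hεne : ε ≠ 0 := hε0.ne'
  -- the phase and its derivatives
  set φ : ℝ → ℝ := fun ξ => y * ξ -
      t * ((Real.sqrt (1 + (1 + ε * ξ)^2) - Real.sqrt 2 - ε * ξ / Real.sqrt 2) / ε^2) with hφ_def
  have hs : ∀ ξ : ℝ, (0:ℝ) < 1 + (1 + ε * ξ)^2 := fun ξ => by positivity
  have hsqne : ∀ ξ : ℝ, Real.sqrt (1 + (1 + ε * ξ)^2) ≠ 0 :=
    fun ξ => (Real.sqrt_pos.2 (hs ξ)).ne'
  set φ' : ℝ → ℝ := fun ξ => y -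
      t * ((ε * (1 + ε * ξ) / Real.sqrt (1 + (1 + ε * ξ)^2) - ε / Real.sqrt 2) / ε^2) with hφ'_def
  set φ'' : ℝ → ℝ := fun ξ =>
      -(t / ((1 + (1 + ε * ξ)^2) * Real.sqrt (1 + (1 + ε * ξ)^2))) with hφ''_def
  have h1 : ∀ ξ : ℝ, HasDerivAt (fun ξ : ℝ => 1 + ε * ξ) ε ξ := fun ξ => by
    simpa using ((hasDerivAt_id ξ).const_mul ε).const_add 1
  have h2 : ∀ ξ : ℝ, HasDerivAt (fun ξ : ℝ => 1 + (1 + ε * ξ)^2) (2 * (1 + ε * ξ) * ε) ξ :=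
    fun ξ => by simpa using ((h1 ξ).pow 2).const_add 1
  have h3 : ∀ ξ : ℝ, HasDerivAt (fun ξ : ℝ => Real.sqrt (1 + (1 + ε * ξ)^2))
      (ε * (1 + ε * ξ) / Real.sqrt (1 + (1 + ε * ξ)^2)) ξ := by
    intro ξ
    have h4 := (Real.hasDerivAt_sqrt (hs ξ).ne').comp ξ (h2 ξ)
    refine h4.congr_deriv ?_
    field_simp
  have h6 : ∀ ξ : ℝ, HasDerivAt (fun ξ : ℝ => ε * ξ / Real.sqrt 2) (ε / Real.sqrt 2) ξ :=
    fun ξ => by simpa using ((hasDerivAt_id ξ).const_mul ε).div_const (Real.sqrt 2)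
  have hd1 : ∀ ξ, HasDerivAt φ (φ' ξ) ξ := by
    intro ξ
    have h7 := (((h3 ξ).sub_const (Real.sqrt 2)).sub (h6 ξ)).div_const (ε^2)
    have h8 : HasDerivAt (fun ξ : ℝ => y * ξ) y ξ := by
      simpa using (hasDerivAt_id ξ).const_mul y
    exact h8.sub (h7.const_mul t)
  have hd2 : ∀ ξ, HasDerivAt φ' (φ'' ξ) ξ := by
    intro ξ
    have hn : HasDerivAt (fun ξ : ℝ => ε * (1 + ε * ξ)) (ε * ε) ξ := by
      simpa using (h1 ξ).const_mul ε
    have hq := hn.div (h3 ξ) (hsqne ξ)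
    have h9 := ((hq.sub_const (ε / Real.sqrt 2)).div_const (ε^2)).const_mul t
    have h10 := (hasDerivAt_const ξ y).sub h9
    refine (h10.congr_deriv ?_).congr_of_eventuallyEq (Filter.Eventually.of_forall fun _ => rfl)
    symm
    have hss : Real.sqrt (1 + (1 + ε * ξ)^2) ^ 2 = 1 + (1 + ε * ξ)^2 :=
      Real.sq_sqrt (hs ξ).le
    have hmm : Real.sqrt (1 + (1 + ε * ξ)^2) * Real.sqrt (1 + (1 + ε * ξ)^2)
        = 1 + (1 + ε * ξ)^2 := Real.mul_self_sqrt (hs ξ).le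
    simp only [hφ''_def]
    have hnum : ε * ε * Real.sqrt (1 + (1 + ε * ξ)^2)
        - ε * (1 + ε * ξ) * (ε * (1 + ε * ξ) / Real.sqrt (1 + (1 + ε * ξ)^2))
        = ε^2 / Real.sqrt (1 + (1 + ε * ξ)^2) := by
      field_simp
      linear_combination hmm
    rw [hnum, ← hss]
    field_simp
    rw [Real.sq_sqrt (by positivity : (0:ℝ) ≤ √(1 + (1 + ε * ξ) ^ 2) ^ 2)]
    ring
  have hc2 : Continuous φ'' := by
    have hscont : Continuous (fun ξ : ℝ => 1 + (1 + ε * ξ)^2) := by continuity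
    exact (continuous_const.div (hscont.mul hscont.sqrt)
      (fun ξ => mul_ne_zero (hs ξ).ne' (hsqne ξ))).neg
  -- the amplitude
  have hχdiff : Differentiable ℝ χ := hχ.differentiable one_ne_zero
  set ψ : ℝ → ℂ := fun ξ => χ (ξ / N) with hψ_def
  set ψ' : ℝ → ℂ := fun ξ => (1 / N) • deriv χ (ξ / N) with hψ'_def
  have hψ : ∀ ξ, HasDerivAt ψ (ψ' ξ) ξ := by
    intro ξ
    have := HasDerivAt.scomp ξ (hχdiff (ξ / N)).hasDerivAt ((hasDerivAt_id ξ).div_const N)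
    simpa [hψ'_def, hψ_def, Function.comp_def] using this
  have hdχc : Continuous (deriv χ) := hχ.continuous_deriv le_rfl
  have hψ'c : Continuous ψ' :=
    ((hdχc.comp (continuous_id.div_const N))).const_smul (1 / N)
  -- support facts
  have hχzero : ∀ u : ℝ, 4 < |u| → χ u = 0 := by
    intro u hu
    by_contra hne
    exact absurd (hsupp (Function.mem_support.2 hne)).2 (not_le.2 hu)
  have hχcs : HasCompactSupport χ :=
    HasCompactSupport.intro (isCompact_Icc (a := (-4:ℝ)) (b := 4))
      (fun x hx => hχzero x (lt_of_not_ge fun hc => hx (Set.mem_Icc.2 (abs_le.1 hc))))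
  have hintd : MeasureTheory.Integrable (fun ξ : ℝ => ‖deriv χ ξ‖) :=
    (hdχc.norm).integrable_of_hasCompactSupport hχcs.deriv.norm
  have hbdd : BddAbove (Set.range fun ξ : ℝ => ‖χ ξ‖) :=
    (hχ.continuous.norm).bddAbove_range_of_hasCompactSupport hχcs.norm
  set M0 : ℝ := ⨆ ξ : ℝ, ‖χ ξ‖ with hM0_def
  have hM : ∀ ξ ∈ Icc (-(4*N)) (4*N), ‖ψ ξ‖ ≤ M0 := fun ξ _ => le_ciSup hbdd (ξ / N)
  have hM0nn : 0 ≤ M0 := le_trans (norm_nonneg (χ 0)) (le_ciSup hbdd 0)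
  set V0 : ℝ := ∫ ξ : ℝ, ‖deriv χ ξ‖ with hV0_def
  have hV0nn : 0 ≤ V0 := MeasureTheory.integral_nonneg fun ξ => norm_nonneg _
  have hab : -(4*N) ≤ 4*N := by linarith
  -- reduce the integral over ℝ to an interval integral
  have hzero : ∀ ξ : ℝ, ξ ∉ Icc (-(4*N)) (4*N) →
      Complex.exp (Complex.I * (φ ξ : ℂ)) * ψ ξ = 0 := by
    intro ξ hξ
    have h4N : 4 * N < |ξ| := by
      by_contra hc
      push_neg at hc
      exact hξ (Set.mem_Icc.2 ⟨(abs_le.1 hc).1, (abs_le.1 hc).2⟩)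
    have : (4:ℝ) < |ξ / N| := by
      rw [abs_div, abs_of_pos hN, lt_div_iff₀ hN]
      linarith
    simp [hψ_def, hχzero _ this]
  have hψcont : Continuous ψ := hχ.continuous.comp (continuous_id.div_const N)
  have hcφ : Continuous φ := continuous_iff_continuousAt.2 fun x => (hd1 x).continuousAt
  have hcf : Continuous (fun ξ : ℝ => Complex.exp (Complex.I * (φ ξ : ℂ)) * ψ ξ) :=
    (Complex.continuous_exp.comp (continuous_const.mul
      (Complex.continuous_ofReal.comp hcφ))).mul hψcont
  have hred : ∫ ξ : ℝ, Complex.exp (Complex.I * (φ ξ : ℂ)) * ψ ξ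
      = ∫ ξ in (-(4*N))..(4*N), Complex.exp (Complex.I * (φ ξ : ℂ)) * ψ ξ := by
    calc ∫ ξ : ℝ, Complex.exp (Complex.I * (φ ξ : ℂ)) * ψ ξ
        = ∫ ξ : ℝ, (Icc (-(4*N)) (4*N)).indicator
            (fun ξ => Complex.exp (Complex.I * (φ ξ : ℂ)) * ψ ξ) ξ := by
          congr 1
          funext ξ
          by_cases h : ξ ∈ Icc (-(4*N)) (4*N)
          · rw [Set.indicator_of_mem h]
          · rw [Set.indicator_of_notMem h, hzero ξ h]
      _ = ∫ ξ in Icc (-(4*N)) (4*N), Complex.exp (Complex.I * (φ ξ : ℂ)) * ψ ξ :=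
          MeasureTheory.integral_indicator measurableSet_Icc
      _ = ∫ ξ in Set.Ioc (-(4*N)) (4*N), Complex.exp (Complex.I * (φ ξ : ℂ)) * ψ ξ :=
          MeasureTheory.integral_Icc_eq_integral_Ioc
      _ = ∫ ξ in (-(4*N))..(4*N), Complex.exp (Complex.I * (φ ξ : ℂ)) * ψ ξ :=
          (intervalIntegral.integral_of_le hab).symm
  -- the curvature lower bound
  set A : ℝ := 1 + ε^2 * N^2 with hA_def
  have hA0 : 0 < A := by positivity
  set K : ℝ := 32 * A with hK_def
  have hK0 : 0 < K := by positivity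
  set lam : ℝ := |t| / (K * Real.sqrt K) with hlam_def
  have hlam : 0 < lam := div_pos (abs_pos.2 ht) (by positivity)
  have hsK : ∀ ξ ∈ Icc (-(4*N)) (4*N), 1 + (1 + ε * ξ)^2 ≤ K := by
    intro ξ hξ
    have h1' : ξ^2 ≤ 16 * N^2 := by nlinarith [hξ.1, hξ.2]
    have h2' : ε^2 * ξ^2 ≤ ε^2 * (16 * N^2) := by nlinarith [sq_nonneg ε]
    simp only [hK_def, hA_def]
    nlinarith [sq_nonneg (1 - ε * ξ)]
  have hfrac : ∀ ξ ∈ Icc (-(4*N)) (4*N),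
      lam ≤ |t| / ((1 + (1 + ε * ξ)^2) * Real.sqrt (1 + (1 + ε * ξ)^2)) := by
    intro ξ hξ
    rw [hlam_def]
    apply div_le_div_of_nonneg_left (abs_nonneg t) (by positivity)
    exact mul_le_mul (hsK ξ hξ) (Real.sqrt_le_sqrt (hsK ξ hξ)) (Real.sqrt_nonneg _) hK0.le
  have hsign : (∀ ξ ∈ Icc (-(4*N)) (4*N), lam ≤ φ'' ξ) ∨
      (∀ ξ ∈ Icc (-(4*N)) (4*N), φ'' ξ ≤ -lam) := by
    rcases lt_or_gt_of_ne ht with htneg | htpos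
    · left
      intro ξ hξ
      have h := hfrac ξ hξ
      rw [abs_of_neg htneg, neg_div] at h
      simp only [hφ''_def]
      linarith
    · right
      intro ξ hξ
      have h := hfrac ξ hξ
      rw [abs_of_pos htpos] at h
      simp only [hφ''_def]
      linarith
  have hamp := vdc_amp hab hlam hd1 hd2 hc2 hsign hψ hψ'c hM
  -- bound the derivative integral
  have hV : ∫ x in (-(4*N))..(4*N), ‖ψ' x‖ ≤ V0 := by
    have e1 : ∫ x in (-(4*N))..(4*N), ‖ψ' x‖
        = ∫ x in (-(4*N))..(4*N), (1/N) * ‖deriv χ (x / N)‖ := by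
      apply intervalIntegral.integral_congr
      intro x _
      simp only [hψ'_def, norm_smul, Real.norm_eq_abs,
        abs_of_pos (one_div_pos.2 hN)]
    rw [e1, intervalIntegral.integral_const_mul]
    have e2 := intervalIntegral.integral_comp_div (a := -(4*N)) (b := 4*N)
      (fun u => ‖deriv χ u‖) hN.ne'
    rw [e2, show -(4*N)/N = (-4:ℝ) from by field_simp, show 4*N/N = (4:ℝ) from by field_simp,
      smul_eq_mul]
    have e3 : 1/N * (N * ∫ x in (-4:ℝ)..4, ‖deriv χ x‖) = ∫ x in (-4:ℝ)..4, ‖deriv χ x‖ := by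
      field_simp
    rw [e3, intervalIntegral.integral_of_le (by norm_num : (-4:ℝ) ≤ 4)]
    exact MeasureTheory.setIntegral_le_integral hintd
      (Filter.Eventually.of_forall fun x => norm_nonneg _)
  -- numeric bound for 8 / sqrt lam
  have hsqlam : Real.sqrt lam = Real.sqrt |t| / (K ^ ((3:ℝ)/4)) := by
    have h1 : K * Real.sqrt K = K ^ ((3:ℝ)/2) := by
      rw [show (3:ℝ)/2 = 1 + 1/2 by norm_num, Real.rpow_add hK0, Real.rpow_one,
        ← Real.sqrt_eq_rpow]
    have h2 : Real.sqrt (K ^ ((3:ℝ)/2)) = K ^ ((3:ℝ)/4) := by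
      rw [Real.sqrt_eq_rpow, ← Real.rpow_mul hK0.le]
      norm_num
    rw [hlam_def, Real.sqrt_div (abs_nonneg t), h1, h2]
  have hsqt : 0 < Real.sqrt |t| := Real.sqrt_pos.2 (abs_pos.2 ht)
  have hK34 : 0 < K ^ ((3:ℝ)/4) := Real.rpow_pos_of_pos hK0 _
  have htinv : (Real.sqrt |t|)⁻¹ = |t| ^ (-(1:ℝ)/2) := by
    rw [show (-(1:ℝ))/2 = -((1:ℝ)/2) by norm_num, Real.rpow_neg (abs_nonneg t),
      ← Real.sqrt_eq_rpow]
  have hKA : K ^ ((3:ℝ)/4) ≤ 32 * A ^ ((3:ℝ)/4) := by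
    rw [hK_def, Real.mul_rpow (by norm_num) hA0.le]
    have h32 : (32:ℝ) ^ ((3:ℝ)/4) ≤ 32 := by
      calc (32:ℝ)^((3:ℝ)/4) ≤ (32:ℝ)^(1:ℝ) :=
            Real.rpow_le_rpow_of_exponent_le (by norm_num) (by norm_num)
        _ = 32 := Real.rpow_one 32
    exact mul_le_mul_of_nonneg_right h32 (Real.rpow_nonneg hA0.le _)
  have hlam_bound : 8 / Real.sqrt lam ≤ 256 * A ^ ((3:ℝ)/4) * |t| ^ (-(1:ℝ)/2) := by
    have he : 8 / Real.sqrt lam = 8 * K ^ ((3:ℝ)/4) * (Real.sqrt |t|)⁻¹ := by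
      rw [hsqlam]
      field_simp
    rw [he, ← htinv]
    calc 8 * K ^ ((3:ℝ)/4) * (Real.sqrt |t|)⁻¹
        ≤ 8 * (32 * A ^ ((3:ℝ)/4)) * (Real.sqrt |t|)⁻¹ := by
          apply mul_le_mul_of_nonneg_right _ (inv_nonneg.2 hsqt.le)
          nlinarith [hKA]
      _ = 256 * A ^ ((3:ℝ)/4) * (Real.sqrt |t|)⁻¹ := by ring
  -- conclude
  have hsl : 0 < 8 / Real.sqrt lam := by positivity
  show ‖∫ ξ : ℝ, Complex.exp (Complex.I * (φ ξ : ℂ)) * ψ ξ‖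
      ≤ 256 * (M0 + V0) * A ^ ((3:ℝ)/4) * |t| ^ (-(1:ℝ)/2)
  rw [hred]
  calc ‖∫ ξ in (-(4*N))..(4*N), Complex.exp (Complex.I * (φ ξ : ℂ)) * ψ ξ‖
      ≤ 8 / Real.sqrt lam * (M0 + ∫ x in (-(4*N))..(4*N), ‖ψ' x‖) := hamp
    _ ≤ 8 / Real.sqrt lam * (M0 + V0) := by
        apply mul_le_mul_of_nonneg_left _ hsl.le
        linarith
    _ ≤ (256 * A ^ ((3:ℝ)/4) * |t| ^ (-(1:ℝ)/2)) * (M0 + V0) := by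
        apply mul_le_mul_of_nonneg_right hlam_bound
        linarith
    _ = 256 * (M0 + V0) * A ^ ((3:ℝ)/4) * |t| ^ (-(1:ℝ)/2) := by ring
end
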